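/- (Key limiting claim in the proof that the control limit tends to ξ.) For each t ∈ {0,1,…,T−1} and each x ∈ ℕ with x < ξ, lim_{k→∞} E_{(Z,K)}[ Ṽ_{t+1}(x+Z, k+Z+K) − Ṽ_{t+1}(Z, k+Z+K) ] = 0, where at stage k the expectation is taken with Z ~ NB(α0+k, p_t) and K ~ NB((N−1)·(α0+k), p_t) independent. -/

import Mathlib

/-!
Beyond the threshold the component is replaced whatever its state, so
`Ṽ_{t+1}(x+z, ·) = Ṽ_{t+1}(z, ·)` once `z ≥ ξ` and the integrand vanishes off `{Z < ξ}`.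
Backward induction shows that `Ṽ` is bounded (each negative binomial law has mass at most `1/p`),
so the expectation is at most a constant times `∑_{z<ξ} NB(α0+k, p_t)(z)`, and each of these
terms is `O((k+z)^z p_t^k)`, which tends to `0`.
-/

open Filter

/-- Negative Binomial pmf with real shape `r` and success probability `p`:
`NB(r,p)(z) = Γ(z+r)/(Γ(r)·z!)·p^r·(1−p)^z` for `r > 0`, and `NB(0,p)` is
the point mass at `0`. -/
noncomputable def NB (r p : ℝ) (z : ℕ) : ℝ :=
  if r = 0 then (if z = 0 then (1 : ℝ) else 0)
  else Real.Gamma ((z : ℝ) + r) / (Real.Gamma r * (Nat.factorial z : ℝ)) * p ^ r * (1 - p) ^ z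

/-- `p_t = (β0 + N·t)/(β0 + N·t + 1)`. -/
noncomputable def pt (β0 : ℝ) (N t : ℕ) : ℝ :=
  (β0 + (N : ℝ) * (t : ℝ)) / (β0 + (N : ℝ) * (t : ℝ) + 1)

/-- Expectation `E_{(Z,K)}[f(Z,K)]` with `Z ~ NB(α0+k, p_t)` and
`K ~ NB((N−1)(α0+k), p_t)` independent. -/
noncomputable def EZK (α0 β0 : ℝ) (N t k : ℕ) (f : ℕ → ℕ → ℝ) : ℝ :=
  ∑' z : ℕ, ∑' κ : ℕ,
    NB (α0 + (k : ℝ)) (pt β0 N t) z * NB (((N : ℝ) - 1) * (α0 + (k : ℝ))) (pt β0 N t) κ * f z κ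

open Finset Topology
open scoped Nat

lemma Gamma_natCast_add_eq_prod_mul {r : ℝ} (hr : 0 < r) (z : ℕ) :
    Real.Gamma (z + r) = (∏ i ∈ range z, (r + i)) * Real.Gamma r := by
  induction z with
  | zero => simp
  | succ n ih =>
    rw [Nat.cast_succ, add_right_comm, Real.Gamma_add_one (by positivity), ih, prod_range_succ]
    ring

lemma NB_of_pos {r : ℝ} (hr : 0 < r) (p : ℝ) (z : ℕ) :
    NB r p z = (∏ i ∈ range z, (r + i)) / z ! * p ^ r * (1 - p) ^ z := by
  rw [NB, if_neg hr.ne', Gamma_natCast_add_eq_prod_mul hr, mul_comm _ (Real.Gamma r),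
    mul_div_mul_left _ _ (Real.Gamma_pos_of_pos hr).ne']

lemma NB_nonneg {r p : ℝ} (hr : 0 ≤ r) (hp0 : 0 ≤ p) (hp1 : p ≤ 1) (z : ℕ) :
    0 ≤ NB r p z := by
  rcases hr.eq_or_lt with rfl | hr
  · rw [NB, if_pos rfl]
    split_ifs <;> norm_num
  · rw [NB_of_pos hr]
    have : 0 ≤ 1 - p := sub_nonneg.2 hp1
    positivity

lemma prod_add_le_factorial_mul_choose {r : ℝ} (hr : 0 ≤ r) (z : ℕ) :
    ∏ i ∈ range z, (r + i) ≤ z ! * ((z + ⌊r⌋₊).choose ⌊r⌋₊ : ℕ) := by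
  rw [← Nat.choose_symm_add, Nat.add_comm z, ← Nat.cast_mul,
    ← Nat.ascFactorial_eq_factorial_mul_choose,
    Nat.ascFactorial_eq_prod_range, Nat.cast_prod]
  refine prod_le_prod (fun i _ => by positivity) fun i _ => ?_
  push_cast
  linarith [Nat.lt_floor_add_one r]

/-- Comparison with the negative binomial law of integer shape `⌊r⌋₊ + 1`. -/
lemma NB_le_mul_choose_mul_pow {r p : ℝ} (hr : 0 ≤ r) (hp0 : 0 ≤ p) (hp1 : p ≤ 1) (z : ℕ) :
    NB r p z ≤ p ^ r * ((z + ⌊r⌋₊).choose ⌊r⌋₊ * (1 - p) ^ z) := by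
  have hq : 0 ≤ 1 - p := sub_nonneg.2 hp1
  rcases hr.eq_or_lt with rfl | hr
  · rw [NB, if_pos rfl]
    split_ifs with hz
    · simp [hz]
    · simp [pow_nonneg hq]
  · have hcoeff : (∏ i ∈ range z, (r + i)) / z ! ≤ (z + ⌊r⌋₊).choose ⌊r⌋₊ := by
      rw [div_le_iff₀ (by positivity), mul_comm]
      exact prod_add_le_factorial_mul_choose hr.le z
    calc NB r p z = p ^ r * ((∏ i ∈ range z, (r + i)) / z ! * (1 - p) ^ z) := by
          rw [NB_of_pos hr]; ring
      _ ≤ _ := by gcongr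

lemma summable_NB {r p : ℝ} (hr : 0 ≤ r) (hp0 : 0 < p) (hp1 : p ≤ 1) : Summable (NB r p) := by
  have hq : ‖1 - p‖ < 1 := by rw [Real.norm_eq_abs, abs_lt]; constructor <;> linarith
  exact .of_nonneg_of_le (NB_nonneg hr hp0.le hp1) (NB_le_mul_choose_mul_pow hr hp0.le hp1)
    ((summable_choose_mul_geometric_of_norm_lt_one _ hq).mul_left _)

/-- `NB r p` has total mass `1`, but this bound avoids the binomial series for real exponents. -/
lemma tsum_NB_le {r p : ℝ} (hr : 0 ≤ r) (hp0 : 0 < p) (hp1 : p ≤ 1) :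
    ∑' z, NB r p z ≤ p⁻¹ := by
  have hq : ‖1 - p‖ < 1 := by rw [Real.norm_eq_abs, abs_lt]; constructor <;> linarith
  calc ∑' z, NB r p z
      ≤ ∑' z : ℕ, p ^ r * ((z + ⌊r⌋₊).choose ⌊r⌋₊ * (1 - p) ^ z) :=
        (summable_NB hr hp0 hp1).tsum_le_tsum (NB_le_mul_choose_mul_pow hr hp0.le hp1)
          ((summable_choose_mul_geometric_of_norm_lt_one _ hq).mul_left _)
    _ = p ^ r / p ^ (⌊r⌋₊ + 1) := by
        rw [tsum_mul_left, tsum_choose_mul_geometric_of_norm_lt_one _ hq, sub_sub_cancel,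
          mul_one_div]
    _ ≤ p ^ (⌊r⌋₊ : ℝ) / p ^ (⌊r⌋₊ + 1) :=
        div_le_div_of_nonneg_right
          (Real.rpow_le_rpow_of_exponent_ge hp0 hp1 (Nat.floor_le hr)) (by positivity)
    _ = p⁻¹ := by
        rw [Real.rpow_natCast, pow_succ, div_mul_cancel_left₀ (pow_ne_zero _ hp0.ne')]

lemma abs_tsum_NB_mul_le {r p B : ℝ} (hr : 0 ≤ r) (hp0 : 0 < p) (hp1 : p ≤ 1) {g : ℕ → ℝ}
    (hg : ∀ n, |g n| ≤ B) : |∑' n, NB r p n * g n| ≤ p⁻¹ * B := by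
  have hB : 0 ≤ B := (abs_nonneg _).trans (hg 0)
  calc |∑' n, NB r p n * g n| ≤ (∑' n, NB r p n) * B :=
        tsum_of_norm_bounded (f := fun n => NB r p n * g n)
          ((summable_NB hr hp0 hp1).hasSum.mul_right B) fun n => by
          rw [Real.norm_eq_abs, abs_mul, abs_of_nonneg (NB_nonneg hr hp0.le hp1 n)]
          exact mul_le_mul_of_nonneg_left (hg n) (NB_nonneg hr hp0.le hp1 n)
    _ ≤ p⁻¹ * B := mul_le_mul_of_nonneg_right (tsum_NB_le hr hp0 hp1) hB

lemma NB_le_add_pow_mul_rpow {r p : ℝ} (hr : 0 < r) (hp0 : 0 ≤ p) (hp1 : p ≤ 1) (z : ℕ) :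
    NB r p z ≤ (r + z) ^ z * p ^ r := by
  have hprod : ∏ i ∈ range z, (r + i) ≤ (r + z) ^ z := by
    calc ∏ i ∈ range z, (r + i) ≤ ∏ _i ∈ range z, (r + z) :=
          prod_le_prod (fun i _ => by positivity) fun i hi => by
            gcongr; exact_mod_cast (mem_range.1 hi).le
      _ = (r + z) ^ z := by rw [prod_const, card_range]
  have hq : (1 - p) ^ z ≤ 1 := pow_le_one₀ (sub_nonneg.2 hp1) (by linarith)
  rw [NB_of_pos hr]
  calc (∏ i ∈ range z, (r + i)) / z ! * p ^ r * (1 - p) ^ z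
      ≤ (∏ i ∈ range z, (r + i)) / 1 * p ^ r * 1 := by
        gcongr
        exact_mod_cast z.factorial_pos
    _ ≤ (r + z) ^ z * p ^ r := by rw [div_one, mul_one]; gcongr

lemma tendsto_add_pow_mul_pow_atTop_nhds_zero (c : ℝ) (z : ℕ) {p : ℝ} (hp0 : 0 ≤ p)
    (hp1 : p < 1) : Tendsto (fun k : ℕ => ((k : ℝ) + c) ^ z * p ^ k) atTop (𝓝 0) := by
  simp_rw [add_pow, sum_mul]
  rw [← sum_const_zero (s := range (z + 1))]
  refine tendsto_finsetSum _ fun j _ => ?_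
  simpa [mul_comm, mul_left_comm, mul_assoc] using
    (tendsto_pow_const_mul_const_pow_of_lt_one j hp0 hp1).const_mul (c ^ (z - j) * z.choose j)

lemma tendsto_NB_atTop {α p : ℝ} (hα : 0 < α) (hp0 : 0 < p) (hp1 : p < 1) (z : ℕ) :
    Tendsto (fun k : ℕ => NB (α + k) p z) atTop (𝓝 0) := by
  have hbound := (tendsto_add_pow_mul_pow_atTop_nhds_zero (α + z) z hp0.le hp1).const_mul (p ^ α)
  rw [mul_zero] at hbound
  refine squeeze_zero (fun k => NB_nonneg (by positivity) hp0.le hp1.le z) (fun k => ?_) hbound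
  calc NB (α + k) p z ≤ (α + k + z) ^ z * p ^ (α + k) :=
        NB_le_add_pow_mul_rpow (by positivity) hp0.le hp1.le z
    _ = p ^ α * ((k + (α + z)) ^ z * p ^ k) := by
        rw [Real.rpow_add hp0, Real.rpow_natCast]; ring

lemma pt_pos {β0 : ℝ} (hβ0 : 0 < β0) (N t : ℕ) : 0 < pt β0 N t := by
  unfold pt; positivity

lemma pt_lt_one {β0 : ℝ} (hβ0 : 0 ≤ β0) (N t : ℕ) : pt β0 N t < 1 := by
  unfold pt
  rw [div_lt_one (by positivity)]
  linarith

section Expectation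

variable {α0 β0 : ℝ} {N : ℕ} (t k : ℕ)

lemma EZK_eq_tsum_mul_tsum (f : ℕ → ℕ → ℝ) :
    EZK α0 β0 N t k f = ∑' z, NB (α0 + k) (pt β0 N t) z *
      ∑' κ, NB ((N - 1) * (α0 + k)) (pt β0 N t) κ * f z κ := by
  simp_rw [← tsum_mul_left, ← mul_assoc]
  rfl

lemma abs_EZK_le (hα0 : 0 ≤ α0) (hβ0 : 0 < β0) (hN : 1 ≤ N) {f : ℕ → ℕ → ℝ} {B : ℝ}
    (hf : ∀ z κ, |f z κ| ≤ B) :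
    |EZK α0 β0 N t k f| ≤ (pt β0 N t)⁻¹ * ((pt β0 N t)⁻¹ * B) := by
  have hN' : (0 : ℝ) ≤ N - 1 := sub_nonneg.2 (by exact_mod_cast hN)
  rw [EZK_eq_tsum_mul_tsum]
  exact abs_tsum_NB_mul_le (by positivity) (pt_pos hβ0 N t) (pt_lt_one hβ0.le N t).le
    fun z => abs_tsum_NB_mul_le (by positivity) (pt_pos hβ0 N t) (pt_lt_one hβ0.le N t).le
      (hf z)

lemma abs_EZK_le_sum_range (hα0 : 0 ≤ α0) (hβ0 : 0 < β0) (hN : 1 ≤ N) {f : ℕ → ℕ → ℝ} {B : ℝ}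
    (hf : ∀ z κ, |f z κ| ≤ B) {ξ : ℕ} (hfξ : ∀ z κ, ξ ≤ z → f z κ = 0) :
    |EZK α0 β0 N t k f| ≤
      ∑ z ∈ range ξ, NB (α0 + k) (pt β0 N t) z * ((pt β0 N t)⁻¹ * B) := by
  have hp0 := pt_pos hβ0 N t
  have hp1 := (pt_lt_one hβ0.le N t).le
  have hN' : (0 : ℝ) ≤ N - 1 := sub_nonneg.2 (by exact_mod_cast hN)
  rw [EZK_eq_tsum_mul_tsum, tsum_eq_sum fun z hz => by
    simp [hfξ z _ (not_lt.1 (mem_range.not.1 hz))]]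
  refine (abs_sum_le_sum_abs _ _).trans (sum_le_sum fun z _ => ?_)
  rw [abs_mul, abs_of_nonneg (NB_nonneg (by positivity) hp0.le hp1 z)]
  exact mul_le_mul_of_nonneg_left (abs_tsum_NB_mul_le (by positivity) hp0 hp1 (hf z))
    (NB_nonneg (by positivity) hp0.le hp1 z)

end Expectation

section ValueFunction

variable {α0 β0 : ℝ} {N T ξ : ℕ} {cp cu : ℝ} {V : ℕ → ℕ → ℕ → ℝ}

lemma V_eq_of_le_of_le (hVT : ∀ x k, V T x k = if ξ ≤ x then cu else 0)
    (hVfail : ∀ t, t < T → ∀ x k, ξ ≤ x →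
      V t x k = cu + EZK α0 β0 N t k (fun z κ => V (t + 1) z (k + z + κ)))
    {s : ℕ} (hs : s ≤ T) {x y : ℕ} (hx : ξ ≤ x) (hy : ξ ≤ y) (k : ℕ) :
    V s x k = V s y k := by
  rcases hs.eq_or_lt with rfl | hs
  · rw [hVT, hVT, if_pos hx, if_pos hy]
  · rw [hVfail s hs x k hx, hVfail s hs y k hy]

lemma exists_abs_V_le (hα0 : 0 ≤ α0) (hβ0 : 0 < β0) (hN : 1 ≤ N)
    (hVT : ∀ x k, V T x k = if ξ ≤ x then cu else 0)
    (hVfail : ∀ t, t < T → ∀ x k, ξ ≤ x →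
      V t x k = cu + EZK α0 β0 N t k (fun z κ => V (t + 1) z (k + z + κ)))
    (hVop : ∀ t, t < T → ∀ x k, x < ξ →
      V t x k =
        min (cp + EZK α0 β0 N t k (fun z κ => V (t + 1) z (k + z + κ)))
          (EZK α0 β0 N t k (fun z κ => V (t + 1) (x + z) (k + z + κ))))
    {s : ℕ} (hs : s ≤ T) : ∃ B, ∀ x k, |V s x k| ≤ B := by
  induction hs using Nat.decreasingInduction with
  | self =>
    refine ⟨|cu|, fun x k => ?_⟩
    rw [hVT]
    split_ifs <;> simp
  | of_succ t ht ih =>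
    obtain ⟨B, hB⟩ := ih
    refine ⟨|cp| + |cu| + (pt β0 N t)⁻¹ * ((pt β0 N t)⁻¹ * B), fun x k => ?_⟩
    have hreset := abs_EZK_le t k hα0 hβ0 hN (f := fun z κ => V (t + 1) z (k + z + κ))
      fun _ _ => hB _ _
    have hcontinue := abs_EZK_le t k hα0 hβ0 hN
      (f := fun z κ => V (t + 1) (x + z) (k + z + κ)) fun _ _ => hB _ _
    have := abs_nonneg cp
    have := abs_nonneg cu
    rcases le_or_gt ξ x with hx | hx
    · rw [hVfail t ht x k hx]
      exact (abs_add_le _ _).trans (by linarith)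
    · rw [hVop t ht x k hx]
      exact abs_min_le_max_abs_abs.trans
        (max_le ((abs_add_le _ _).trans (by linarith)) (by linarith))

end ValueFunction

theorem expected_difference_tendsto_zero_general
    (α0 β0 : ℝ) (hα0 : 0 < α0) (hβ0 : 0 < β0)
    (N T : ℕ) (hN : 1 ≤ N)
    (ξ : ℕ)
    (cp cu : ℝ)
    (V : ℕ → ℕ → ℕ → ℝ)
    (hVT : ∀ x k, V T x k = if ξ ≤ x then cu else 0)
    (hVfail : ∀ t, t < T → ∀ x k, ξ ≤ x →
      V t x k = cu + EZK α0 β0 N t k (fun z κ => V (t + 1) z (k + z + κ)))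
    (hVop : ∀ t, t < T → ∀ x k, x < ξ →
      V t x k =
        min (cp + EZK α0 β0 N t k (fun z κ => V (t + 1) z (k + z + κ)))
          (EZK α0 β0 N t k (fun z κ => V (t + 1) (x + z) (k + z + κ)))) :
    ∀ t, t < T → ∀ x : ℕ, x < ξ →
      Filter.Tendsto
        (fun k : ℕ =>
          EZK α0 β0 N t k
            (fun z κ => V (t + 1) (x + z) (k + z + κ) - V (t + 1) z (k + z + κ)))
        Filter.atTop (nhds 0) := by
  intro t ht x _
  set p := pt β0 N t
  obtain ⟨B, hB⟩ := exists_abs_V_le hα0.le hβ0 hN hVT hVfail hVop (Nat.succ_le_of_lt ht)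
  have hbound : ∀ k, |EZK α0 β0 N t k
      (fun z κ => V (t + 1) (x + z) (k + z + κ) - V (t + 1) z (k + z + κ))| ≤
        ∑ z ∈ range ξ, NB (α0 + k) p z * (p⁻¹ * (2 * B)) := fun k =>
    abs_EZK_le_sum_range t k hα0.le hβ0 hN
      (fun z κ => (abs_sub _ _).trans (by linarith [hB (x + z) (k + z + κ), hB z (k + z + κ)]))
      fun z κ hz => sub_eq_zero.2
        (V_eq_of_le_of_le hVT hVfail (Nat.succ_le_of_lt ht) (hz.trans le_add_self) hz _)
  have hlim : Tendsto (fun k : ℕ => ∑ z ∈ range ξ, NB (α0 + k) p z * (p⁻¹ * (2 * B)))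
      atTop (𝓝 0) := by
    simpa using tendsto_finsetSum (range ξ) fun z _ =>
      (tendsto_NB_atTop hα0 (pt_pos hβ0 N t) (pt_lt_one hβ0.le N t) z).mul_const (p⁻¹ * (2 * B))
  exact squeeze_zero_norm hbound hlim

/-- Key limiting claim: the expected value-difference between starting at `x+Z` and
at `Z` vanishes as the pooled data `k → ∞`. -/
theorem expected_difference_tendsto_zero
    (α0 β0 : ℝ) (hα0 : 0 < α0) (hβ0 : 0 < β0)
    (N T : ℕ) (hN : 1 ≤ N) (hT : 1 ≤ T)
    (ξ : ℕ) (hξ : 1 ≤ ξ)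
    (cp cu : ℝ) (hcp : 0 < cp) (hcpcu : cp < cu)
    (V : ℕ → ℕ → ℕ → ℝ)
    (hVT : ∀ x k, V T x k = if ξ ≤ x then cu else 0)
    (hVfail : ∀ t, t < T → ∀ x k, ξ ≤ x →
      V t x k = cu + EZK α0 β0 N t k (fun z κ => V (t + 1) z (k + z + κ)))
    (hVop : ∀ t, t < T → ∀ x k, x < ξ →
      V t x k =
        min (cp + EZK α0 β0 N t k (fun z κ => V (t + 1) z (k + z + κ)))
          (EZK α0 β0 N t k (fun z κ => V (t + 1) (x + z) (k + z + κ)))) :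
    ∀ t, t < T → ∀ x : ℕ, x < ξ →
      Filter.Tendsto
        (fun k : ℕ =>
          EZK α0 β0 N t k
            (fun z κ => V (t + 1) (x + z) (k + z + κ) - V (t + 1) z (k + z + κ)))
        Filter.atTop (nhds 0) :=
  expected_difference_tendsto_zero_general α0 β0 hα0 hβ0 N T hN ξ cp cu V hVT hVfail hVop
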